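/- Let K be an even hyperbolic lattice of signature (1, n−1), (c_i) integral vectors in the closure of the positive cone with Σ a_i c_i = 0 (a_i nonzero integers), and p⁺(λ) := Σ a_i|λ·c_i|. Then the series Θ⁺(τ) = Σ_{λ∈K^∨} p⁺(λ) e^{−2πiτQ(λ)} (valued in ℂ[K^∨/K]) converges absolutely and uniformly on compact subsets of the upper half-plane, hence defines a holomorphic function on ℍ. -/

import Mathlib

/-!
If `p⁺(λ) ≠ 0`, then since `∑ aᵢ (λ·cᵢ) = 0` there are `i, j` with `λ·cᵢ > 0 > λ·cⱼ`; these
pairings are integers, so `A = λ·cᵢ ≥ 1` and `B = -λ·cⱼ ≥ 1`. Two vectors of the closed positive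
cone separated by `λ` have `cᵢ·cⱼ > 0`, so `v = A cⱼ + B cᵢ` is orthogonal to `λ` and timelike,
with `v·v ≥ 2ABκ` for `κ` the least positive `cᵢ·cⱼ`. A vector orthogonal to a timelike `v`
satisfies `(v·v) ‖λ‖² ≤ 2 u(v)² (-λ·λ)` with `u(x) = x₀ + x₁` (apply `-z·z ≥ ‖z‖²`, valid on
`u = 0`, to `z = u(v) λ - u(λ) v`). Since `A, B, |u(v)| = O(‖λ‖)`, this gives `-Q(λ) ≥ δ ‖λ‖` on
the support of `p⁺`. As `K^∨ ⊆ ½ ℤ^{n+2}`, the majorant `‖λ‖ e^{-2π y δ ‖λ‖}` is summable, and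
the Weierstrass M-test on `Im τ > y` gives holomorphy.
-/

open Real

/-- An even symmetric bilinear form of signature `(1, n+1)` on `ℝ^{n+2}`. -/
def bh (n : ℕ) (x y : Fin (n+2) → ℝ) : ℝ :=
  x 0 * y 1 + x 1 * y 0 - 2 * ∑ i ∈ Finset.Ioi (1 : Fin (n+2)), x i * y i

/-- The quadratic form `Q(x) = (1/2) x·x`. -/
noncomputable def qh (n : ℕ) (x : Fin (n+2) → ℝ) : ℝ := bh n x x / 2

/-- Lattice vectors: vectors with integer coordinates. -/
def intVec (n : ℕ) (x : Fin (n+2) → ℝ) : Prop := ∀ i, ∃ m : ℤ, x i = (m : ℝ)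

/-- Vectors of the dual lattice `K^∨`. -/
def dualVec (n : ℕ) (x : Fin (n+2) → ℝ) : Prop :=
  ∀ y, intVec n y → ∃ m : ℤ, bh n x y = (m : ℝ)

lemma exists_pos_and_exists_neg_of_sum_mul_abs_ne_zero {ι R : Type*} [Ring R] [LinearOrder R]
    [IsOrderedRing R] {S : Finset ι} {w b : ι → R} (hsum : ∑ i ∈ S, w i * b i = 0)
    (habs : ∑ i ∈ S, w i * |b i| ≠ 0) : (∃ i ∈ S, 0 < b i) ∧ ∃ j ∈ S, b j < 0 := by
  constructor
  · by_contra! h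
    refine habs ?_
    calc ∑ i ∈ S, w i * |b i| = -∑ i ∈ S, w i * b i := by
          rw [← Finset.sum_neg_distrib]
          exact Finset.sum_congr rfl fun i hi => by rw [abs_of_nonpos (h i hi), mul_neg]
      _ = 0 := by rw [hsum, neg_zero]
  · by_contra! h
    refine habs ?_
    rw [← hsum]
    exact Finset.sum_congr rfl fun i hi => by rw [abs_of_nonneg (h i hi)]

lemma exists_pos_forall_le_of_pos {α : Type*} (s : Finset α) (f : α → ℝ) :
    ∃ κ > 0, ∀ x ∈ s, 0 < f x → κ ≤ f x := by
  classical
  obtain h | h := (s.filter (0 < f ·)).eq_empty_or_nonempty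
  · refine ⟨1, one_pos, fun x hx hfx => ?_⟩
    have hmem : x ∈ s.filter (0 < f ·) := Finset.mem_filter.2 ⟨hx, hfx⟩
    simp [h] at hmem
  · exact ⟨_, (Finset.lt_inf'_iff h).2 fun x hx => (Finset.mem_filter.1 hx).2,
      fun x hx hfx => Finset.inf'_le _ (Finset.mem_filter.2 ⟨hx, hfx⟩)⟩

lemma summable_pi_prod_of_nonneg {ι β : Type*} [Fintype ι] {g : β → ℝ} (hg0 : ∀ b, 0 ≤ g b)
    (hg : Summable g) : Summable fun m : ι → β => ∏ k, g (m k) := by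
  classical
  refine summable_of_sum_le (c := ∏ _k : ι, ∑' b, g b)
    (fun m => Finset.prod_nonneg fun k _ => hg0 _) fun s => ?_
  calc ∑ m ∈ s, ∏ k, g (m k)
      ≤ ∑ m ∈ Fintype.piFinset fun k => s.image (· k), ∏ k, g (m k) :=
        Finset.sum_le_sum_of_subset_of_nonneg
          (fun m hm => Fintype.mem_piFinset.2 fun k => Finset.mem_image_of_mem _ hm)
          fun m _ _ => Finset.prod_nonneg fun k _ => hg0 _
    _ = ∏ k, ∑ b ∈ s.image (· k), g b := (Finset.prod_univ_sum _ _).symm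
    _ ≤ ∏ _k : ι, ∑' b, g b :=
        Finset.prod_le_prod (fun k _ => Finset.sum_nonneg fun b _ => hg0 b)
          fun k _ => hg.sum_le_tsum _ fun b _ => hg0 b

lemma summable_exp_neg_mul_abs_int {c : ℝ} (hc : 0 < c) :
    Summable fun m : ℤ => Real.exp (-(c * |(m : ℝ)|)) := by
  have hnat : Summable fun m : ℕ => Real.exp (-(c * |((m : ℤ) : ℝ)|)) := by
    refine (Real.summable_exp_nat_mul_iff.2 (neg_neg_of_pos hc)).congr fun m => ?_
    simp only [Int.cast_natCast, Nat.abs_cast]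
    ring_nf
  refine Summable.of_nat_of_neg hnat (hnat.congr fun m => ?_)
  simp

lemma mul_exp_neg_mul_le {c : ℝ} (hc : 0 < c) (t : ℝ) :
    t * Real.exp (-(c * t)) ≤ 2 / c * Real.exp (-(c / 2 * t)) := by
  calc t * Real.exp (-(c * t)) = 2 / c * (c / 2 * t * Real.exp (-(c * t))) := by
        field_simp
    _ ≤ 2 / c * (Real.exp (c / 2 * t) * Real.exp (-(c * t))) := by
        gcongr
        linarith [Real.add_one_le_exp (c / 2 * t)]
    _ = 2 / c * Real.exp (-(c / 2 * t)) := by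
        rw [← Real.exp_add]
        ring_nf

section QSeries

lemma norm_cexp_two_pi_I_mul (τ : ℂ) (r : ℝ) :
    ‖Complex.exp (2 * π * Complex.I * τ * r)‖ = Real.exp (-(2 * π * τ.im * r)) := by
  rw [Complex.norm_exp]
  congr 1
  simp [Complex.mul_re, Complex.mul_im]

variable {α : Type*} (p : α → ℂ) (r : α → ℝ)

lemma norm_mul_cexp_le {y : ℝ} {τ : ℂ} (hy : y ≤ τ.im) (l : α) (hr : p l ≠ 0 → 0 ≤ r l) :
    ‖p l * Complex.exp (2 * π * Complex.I * τ * r l)‖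
      ≤ ‖p l‖ * Real.exp (-(2 * π * y * r l)) := by
  rw [norm_mul, norm_cexp_two_pi_I_mul]
  by_cases hp : p l = 0
  · simp [hp]
  · gcongr
    nlinarith [Real.pi_pos, hr hp]

lemma summable_and_differentiableOn_tsum_mul_cexp (hr : ∀ l, p l ≠ 0 → 0 ≤ r l)
    (hp : ∀ y : ℝ, 0 < y → Summable fun l => ‖p l‖ * Real.exp (-(2 * π * y * r l))) :
    (∀ τ : ℂ, 0 < τ.im →
      Summable fun l => ‖p l * Complex.exp (2 * π * Complex.I * τ * r l)‖) ∧
    DifferentiableOn ℂ (fun τ : ℂ => ∑' l, p l * Complex.exp (2 * π * Complex.I * τ * r l))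
      {τ : ℂ | 0 < τ.im} := by
  refine ⟨fun τ hτ => ?_, fun τ₀ hτ₀ => ?_⟩
  · refine (hp τ.im hτ).congr fun l => ?_
    rw [norm_mul, norm_cexp_two_pi_I_mul]
  · set U := {τ : ℂ | τ₀.im / 2 < τ.im}
    have hU : IsOpen U := isOpen_lt continuous_const Complex.continuous_im
    have hτ₀U : τ₀ ∈ U := by
      change τ₀.im / 2 < τ₀.im
      linarith [hτ₀.out]
    have hdiff := Complex.differentiableOn_tsum_of_summable_norm (hp _ (half_pos hτ₀))
      (fun l => (by fun_prop : Differentiable ℂ _).differentiableOn) hU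
      fun l τ hτ => norm_mul_cexp_le p r (le_of_lt hτ) l (hr l)
    exact (hdiff.differentiableAt (hU.mem_nhds hτ₀U)).differentiableWithinAt

end QSeries

section LorentzianForm

variable {n : ℕ}

lemma bh_comm (x y : Fin (n+2) → ℝ) : bh n x y = bh n y x := by
  simp only [bh, mul_comm (x _) (y _)]
  ring

def bhRight (x : Fin (n+2) → ℝ) : (Fin (n+2) → ℝ) →ₗ[ℝ] ℝ where
  toFun := bh n x
  map_add' y z := by
    simp only [bh, Pi.add_apply, mul_add, Finset.sum_add_distrib]
    ring
  map_smul' s y := by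
    have hsum : ∑ i ∈ Finset.Ioi (1 : Fin (n+2)), x i * (s * y i)
        = s * ∑ i ∈ Finset.Ioi (1 : Fin (n+2)), x i * y i := by
      rw [Finset.mul_sum]
      exact Finset.sum_congr rfl fun i _ => by ring
    simp only [bh, Pi.smul_apply, smul_eq_mul, RingHom.id_apply, hsum]
    ring

@[simp]
lemma bhRight_apply (x y : Fin (n+2) → ℝ) : bhRight x y = bh n x y := rfl

lemma bh_sum_smul_right {ι : Type*} (S : Finset ι) (x : Fin (n+2) → ℝ) (f : ι → ℝ)
    (y : ι → Fin (n+2) → ℝ) : bh n x (∑ i ∈ S, f i • y i) = ∑ i ∈ S, f i * bh n x (y i) := by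
  simp only [← bhRight_apply, map_sum, map_smul, smul_eq_mul]

lemma bh_smul_add_smul_self (x y : Fin (n+2) → ℝ) (s t : ℝ) :
    bh n (s • x + t • y) (s • x + t • y)
      = s ^ 2 * bh n x x + 2 * s * t * bh n x y + t ^ 2 * bh n y y := by
  have hright : ∀ z, bh n z (s • x + t • y) = s * bh n z x + t * bh n z y := fun z => by
    simp only [← bhRight_apply, map_add, map_smul, smul_eq_mul]
  rw [hright, bh_comm _ x, bh_comm _ y, hright, hright, bh_comm y x]
  ring

lemma fin_eq_zero_or_eq_one_or_one_lt (k : Fin (n+2)) : k = 0 ∨ k = 1 ∨ 1 < k := by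
  simp only [Fin.ext_iff, Fin.lt_def, Fin.val_zero, Fin.val_one]
  omega

-- `bh x x = (x 0 + x 1) ^ 2 / 2 - (x 0 - x 1) ^ 2 / 2 - 2 ∑_{i > 1} x i ^ 2`.
def timeCoord (x : Fin (n+2) → ℝ) : ℝ := x 0 + x 1

lemma abs_timeCoord_le (x : Fin (n+2) → ℝ) : |timeCoord x| ≤ 2 * ‖x‖ := by
  have h0 := norm_le_pi_norm x 0
  have h1 := norm_le_pi_norm x 1
  rw [Real.norm_eq_abs] at h0 h1
  exact (abs_add_le _ _).trans (by linarith)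

lemma norm_sq_le_timeCoord_sq_sub_bh (x : Fin (n+2) → ℝ) :
    ‖x‖ ^ 2 ≤ timeCoord x ^ 2 - bh n x x := by
  set R := timeCoord x ^ 2 - bh n x x
  have hR : R = x 0 ^ 2 + x 1 ^ 2 + 2 * ∑ i ∈ Finset.Ioi (1 : Fin (n+2)), x i ^ 2 := by
    simp only [R, timeCoord, bh, sq]
    ring
  have hsum : 0 ≤ ∑ i ∈ Finset.Ioi (1 : Fin (n+2)), x i ^ 2 :=
    Finset.sum_nonneg fun i _ => sq_nonneg _
  have hcoord : ∀ k, x k ^ 2 ≤ R := by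
    intro k
    rcases fin_eq_zero_or_eq_one_or_one_lt k with rfl | rfl | hk
    · nlinarith [sq_nonneg (x 1)]
    · nlinarith [sq_nonneg (x 0)]
    · have := Finset.single_le_sum (fun i _ => sq_nonneg (x i)) (Finset.mem_Ioi.2 hk)
      nlinarith [sq_nonneg (x 0), sq_nonneg (x 1)]
  have hR0 : 0 ≤ R := (sq_nonneg _).trans (hcoord 0)
  have hnorm : ‖x‖ ≤ √R := (pi_norm_le_iff_of_nonneg (Real.sqrt_nonneg R)).2 fun k =>
    Real.abs_le_sqrt (hcoord k)
  exact (Real.le_sqrt (norm_nonneg x) hR0).1 hnorm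

lemma abs_bh_le (x y : Fin (n+2) → ℝ) : |bh n x y| ≤ 2 * (n + 1) * ‖x‖ * ‖y‖ := by
  have hij : ∀ i j, |x i * y j| ≤ ‖x‖ * ‖y‖ := fun i j => by
    rw [abs_mul]
    exact mul_le_mul (norm_le_pi_norm x i) (norm_le_pi_norm y j) (abs_nonneg _) (norm_nonneg _)
  have hsum : |∑ i ∈ Finset.Ioi (1 : Fin (n+2)), x i * y i| ≤ n * (‖x‖ * ‖y‖) := by
    refine (Finset.abs_sum_le_sum_abs _ _).trans ?_
    refine (Finset.sum_le_card_nsmul _ _ _ fun i _ => hij i i).trans ?_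
    simp
  have h01 := abs_le.1 (hij 0 1)
  have h10 := abs_le.1 (hij 1 0)
  have hs := abs_le.1 hsum
  rw [abs_le]
  unfold bh
  constructor <;> nlinarith

end LorentzianForm

section Cone

variable {n : ℕ}

lemma norm_sq_timeCoord_smul_sub_smul_le (x y : Fin (n+2) → ℝ) :
    ‖timeCoord y • x - timeCoord x • y‖ ^ 2 ≤ 2 * timeCoord x * timeCoord y * bh n x y
      - timeCoord y ^ 2 * bh n x x - timeCoord x ^ 2 * bh n y y := by
  have hz := norm_sq_le_timeCoord_sq_sub_bh (n := n) (timeCoord y • x - timeCoord x • y)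
  have hu : timeCoord (timeCoord y • x - timeCoord x • y) = 0 := by
    simp only [timeCoord, Pi.sub_apply, Pi.smul_apply, smul_eq_mul]
    ring
  rw [hu, sub_eq_add_neg (timeCoord y • x), ← neg_smul, bh_smul_add_smul_self] at hz
  rw [sub_eq_add_neg (timeCoord y • x), ← neg_smul]
  linarith

lemma eq_zero_of_timeCoord_eq_zero {x : Fin (n+2) → ℝ} (hx : 0 ≤ bh n x x)
    (hu : timeCoord x = 0) : x = 0 := by
  have h := norm_sq_le_timeCoord_sq_sub_bh x
  rw [hu] at h
  exact norm_eq_zero.1 (pow_eq_zero_iff two_ne_zero |>.1 (by nlinarith [sq_nonneg ‖x‖]))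

lemma bh_self_nonpos_of_bh_eq_zero {lam v : Fin (n+2) → ℝ} (hv : 0 < bh n v v)
    (hlv : bh n lam v = 0) : bh n lam lam ≤ 0 := by
  have hz := norm_sq_timeCoord_smul_sub_smul_le lam v
  have hvv := norm_sq_le_timeCoord_sq_sub_bh v
  rw [hlv, mul_zero, zero_sub] at hz
  have hu : 0 < timeCoord v ^ 2 := by nlinarith [sq_nonneg ‖v‖]
  nlinarith [sq_nonneg ‖timeCoord v • lam - timeCoord lam • v‖, sq_nonneg (timeCoord lam)]

lemma bh_self_mul_norm_sq_le {lam v : Fin (n+2) → ℝ} (hv : 0 < bh n v v)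
    (hlv : bh n lam v = 0) : bh n v v * ‖lam‖ ^ 2 ≤ 2 * timeCoord v ^ 2 * -bh n lam lam := by
  have hz := norm_sq_timeCoord_smul_sub_smul_le lam v
  have hlam := norm_sq_le_timeCoord_sq_sub_bh lam
  have hvv := norm_sq_le_timeCoord_sq_sub_bh v
  have hneg := bh_self_nonpos_of_bh_eq_zero hv hlv
  rw [hlv, mul_zero, zero_sub] at hz
  nlinarith [sq_nonneg ‖timeCoord v • lam - timeCoord lam • v‖, sq_nonneg ‖v‖,
    mul_le_mul_of_nonneg_left hlam hv.le]

lemma closure_posCone_subset :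
    closure {x : Fin (n+2) → ℝ | 0 < bh n x x ∧ 0 < x 0 + x 1} ⊆
      {x | 0 ≤ bh n x x ∧ 0 ≤ timeCoord x} := by
  refine closure_minimal (fun x hx => ⟨hx.1.le, hx.2.le⟩) ?_
  refine (isClosed_le (f := fun _ => (0 : ℝ)) continuous_const ?_).inter
    (isClosed_le (f := fun _ => (0 : ℝ)) continuous_const ?_)
  · unfold bh; fun_prop
  · unfold timeCoord; fun_prop

lemma bh_pos_of_separated {lam x y : Fin (n+2) → ℝ} (hx : 0 ≤ bh n x x ∧ 0 ≤ timeCoord x)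
    (hy : 0 ≤ bh n y y ∧ 0 ≤ timeCoord y) (hlx : 0 < bh n lam x) (hly : bh n lam y < 0) :
    0 < bh n x y := by
  have hux : 0 < timeCoord x := hx.2.lt_of_ne fun h => by
    rw [eq_zero_of_timeCoord_eq_zero hx.1 h.symm, ← bhRight_apply, map_zero] at hlx
    exact hlx.false
  by_contra! hxy
  have hz := norm_sq_timeCoord_smul_sub_smul_le x y
  have hz0 : timeCoord y • x - timeCoord x • y = 0 := by
    refine norm_eq_zero.1 (pow_eq_zero_iff two_ne_zero |>.1 (le_antisymm ?_ (sq_nonneg _)))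
    nlinarith [mul_nonneg (mul_nonneg hux.le hy.2) (neg_nonneg.2 hxy),
      mul_nonneg (sq_nonneg (timeCoord y)) hx.1, mul_nonneg (sq_nonneg (timeCoord x)) hy.1]
  have h := congrArg (bhRight lam) hz0
  simp only [map_sub, map_smul, map_zero, bhRight_apply, smul_eq_mul] at h
  nlinarith [mul_nonneg hy.2 hlx.le, mul_pos hux (neg_pos.2 hly)]

lemma mul_norm_le_neg_bh_self {lam x y : Fin (n+2) → ℝ} {κ K M : ℝ}
    (hx : 0 ≤ bh n x x) (hy : 0 ≤ bh n y y) (hκ : 0 < κ) (hxy : κ ≤ bh n x y)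
    (hxM : ‖x‖ ≤ M) (hyM : ‖y‖ ≤ M) (hlx : 1 ≤ bh n lam x) (hly : 1 ≤ -bh n lam y)
    (hlxK : bh n lam x ≤ K * ‖lam‖) (hlyK : -bh n lam y ≤ K * ‖lam‖) :
    κ * ‖lam‖ ≤ 16 * K * M ^ 2 * -bh n lam lam := by
  set A := bh n lam x
  set B := -bh n lam y
  set v := A • y + B • x
  have hlv : bh n lam v = 0 := by
    rw [← bhRight_apply, map_add, map_smul, map_smul]
    simp only [bhRight_apply, smul_eq_mul, A, B]
    ring
  have hvv : 2 * A * B * κ ≤ bh n v v := by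
    rw [bh_smul_add_smul_self, bh_comm y x]
    nlinarith [mul_nonneg (sq_nonneg A) hy, mul_nonneg (sq_nonneg B) hx,
      mul_le_mul_of_nonneg_left hxy (by positivity : (0 : ℝ) ≤ 2 * A * B)]
  have hv : 0 < bh n v v := lt_of_lt_of_le (by positivity) hvv
  have hvM : ‖v‖ ≤ (A + B) * M := by
    calc ‖v‖ ≤ A * ‖y‖ + B * ‖x‖ := by
          refine (norm_add_le _ _).trans_eq ?_
          rw [norm_smul, norm_smul, Real.norm_of_nonneg (by linarith),
            Real.norm_of_nonneg (by linarith)]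
      _ ≤ (A + B) * M := by nlinarith
  have huv : timeCoord v ^ 2 ≤ 4 * (A + B) ^ 2 * M ^ 2 := by
    have h := (abs_timeCoord_le v).trans (mul_le_mul_of_nonneg_left hvM zero_le_two)
    nlinarith [sq_abs (timeCoord v), abs_nonneg (timeCoord v)]
  have hkey := bh_self_mul_norm_sq_le hv hlv
  have hneg : 0 ≤ -bh n lam lam := neg_nonneg.2 (bh_self_nonpos_of_bh_eq_zero hv hlv)
  have hlam : 0 < ‖lam‖ := (norm_nonneg lam).lt_of_ne fun h => by
    rw [← h, mul_zero] at hlxK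
    linarith
  have hAB : (A + B) ^ 2 ≤ 4 * A * B * (K * ‖lam‖) := by
    nlinarith [mul_le_mul_of_nonneg_left hlxK (by linarith : (0 : ℝ) ≤ A),
      mul_le_mul_of_nonneg_left hlyK (by linarith : (0 : ℝ) ≤ B),
      mul_le_mul_of_nonneg_left hly (by nlinarith : (0 : ℝ) ≤ A * (K * ‖lam‖)),
      mul_le_mul_of_nonneg_left hlx (by nlinarith : (0 : ℝ) ≤ B * (K * ‖lam‖))]
  have hc : 0 < 2 * A * B * ‖lam‖ := by positivity
  refine le_of_mul_le_mul_left ?_ hc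
  calc 2 * A * B * ‖lam‖ * (κ * ‖lam‖) = 2 * A * B * κ * ‖lam‖ ^ 2 := by ring
    _ ≤ bh n v v * ‖lam‖ ^ 2 := by gcongr
    _ ≤ 2 * timeCoord v ^ 2 * -bh n lam lam := hkey
    _ ≤ 2 * (4 * (A + B) ^ 2 * M ^ 2) * -bh n lam lam := by gcongr
    _ ≤ 2 * (4 * (4 * A * B * (K * ‖lam‖)) * M ^ 2) * -bh n lam lam := by gcongr
    _ = 2 * A * B * ‖lam‖ * (16 * K * M ^ 2 * -bh n lam lam) := by ring

end Cone

section DualLattice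

variable {n : ℕ}

lemma exists_int_eq_two_mul_of_dualVec {x : Fin (n+2) → ℝ} (hx : dualVec n x) (k : Fin (n+2)) :
    ∃ m : ℤ, 2 * x k = m := by
  have hsingle : ∀ j, intVec n (Pi.single j 1) := fun j i => by
    by_cases h : i = j
    · exact ⟨1, by simp [h]⟩
    · exact ⟨0, by simp [h]⟩
  -- pairing with the unit vectors `e 1`, `e 0` and `e k` (`1 < k`) gives `x 0`, `x 1`, `-2 x k`
  rcases fin_eq_zero_or_eq_one_or_one_lt k with rfl | rfl | hk
  · obtain ⟨m, hm⟩ := hx _ (hsingle 1)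
    refine ⟨2 * m, ?_⟩
    simp [bh, Pi.single_apply] at hm
    push_cast; rw [← hm]
  · obtain ⟨m, hm⟩ := hx _ (hsingle 0)
    refine ⟨2 * m, ?_⟩
    simp [bh, Pi.single_apply] at hm
    push_cast; rw [← hm]
  · obtain ⟨m, hm⟩ := hx _ (hsingle k)
    refine ⟨-m, ?_⟩
    simp [bh, Pi.single_apply, hk, hk.ne', (zero_lt_one.trans hk).ne'] at hm
    push_cast; linarith

lemma summable_exp_neg_mul_norm_dualVec {c : ℝ} (hc : 0 < c) :
    Summable fun l : {x : Fin (n+2) → ℝ // dualVec n x} => Real.exp (-(c * ‖l.1‖)) := by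
  set ψ : {x // dualVec n x} → Fin (n+2) → ℤ := fun l k => round (2 * l.1 k)
  have hψ : ∀ l k, (ψ l k : ℝ) = 2 * l.1 k := fun l k => by
    obtain ⟨m, hm⟩ := exists_int_eq_two_mul_of_dualVec l.2 k
    simp [ψ, hm]
  have hinj : Function.Injective ψ := fun l l' h => Subtype.ext <| funext fun k => by
    have := congrArg (fun m => (m k : ℝ)) h
    simp only [hψ] at this
    linarith
  set c' := c / (2 * (n + 2))
  have hc' : 0 < c' := by positivity
  refine ((summable_pi_prod_of_nonneg (fun _ => (Real.exp_pos _).le)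
    (summable_exp_neg_mul_abs_int hc')).comp_injective hinj).of_nonneg_of_le
    (fun _ => (Real.exp_pos _).le) fun l => ?_
  rw [Function.comp_apply, ← Real.exp_sum, Real.exp_le_exp, Finset.sum_neg_distrib, neg_le_neg_iff]
  calc ∑ k, c' * |(ψ l k : ℝ)| ≤ ∑ _k : Fin (n+2), c' * (2 * ‖l.1‖) := by
        refine Finset.sum_le_sum fun k _ => ?_
        rw [hψ, abs_mul, abs_two]
        gcongr
        exact norm_le_pi_norm l.1 k
    _ = c * ‖l.1‖ := by
        simp only [Finset.sum_const, Finset.card_univ, Fintype.card_fin, nsmul_eq_mul, c']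
        push_cast
        field_simp

lemma summable_norm_mul_exp_neg_mul_norm_dualVec {c : ℝ} (hc : 0 < c) :
    Summable fun l : {x : Fin (n+2) → ℝ // dualVec n x} => ‖l.1‖ * Real.exp (-(c * ‖l.1‖)) :=
  ((summable_exp_neg_mul_norm_dualVec (half_pos hc)).mul_left (2 / c)).of_nonneg_of_le
    (fun _ => by positivity) fun _ => mul_exp_neg_mul_le hc _

lemma one_le_abs_bh_of_dualVec {lam y : Fin (n+2) → ℝ} (hlam : dualVec n lam) (hy : intVec n y)
    (h : bh n lam y ≠ 0) : 1 ≤ |bh n lam y| := by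
  obtain ⟨m, hm⟩ := hlam y hy
  rw [hm] at h ⊢
  exact_mod_cast Int.one_le_abs (by exact_mod_cast h)

end DualLattice

section PPlus

variable {n : ℕ}

def pPlus {ι : Type*} (S : Finset ι) (c : ι → Fin (n+2) → ℝ) (a : ι → ℤ)
    (x : Fin (n+2) → ℝ) : ℝ :=
  ∑ i ∈ S, (a i : ℝ) * |bh n x (c i)|

lemma abs_pPlus_le {ι : Type*} (S : Finset ι) (c : ι → Fin (n+2) → ℝ) (a : ι → ℤ)
    (x : Fin (n+2) → ℝ) :
    |pPlus S c a x| ≤ (∑ i ∈ S, |(a i : ℝ)| * (2 * (n + 1) * ‖c i‖)) * ‖x‖ := by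
  refine (Finset.abs_sum_le_sum_abs _ _).trans ?_
  rw [Finset.sum_mul]
  refine Finset.sum_le_sum fun i _ => ?_
  rw [abs_mul, abs_abs, mul_assoc]
  gcongr
  linarith [abs_bh_le x (c i)]

lemma exists_pos_mul_norm_le_neg_qh_of_pPlus_ne_zero {ι : Type*} (S : Finset ι)
    (c : ι → Fin (n+2) → ℝ) (a : ι → ℤ)
    (hc : ∀ i ∈ S, intVec n (c i) ∧ c i ∈ closure {x | 0 < bh n x x ∧ 0 < x 0 + x 1})
    (hrel : ∑ i ∈ S, (a i : ℝ) • c i = 0) :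
    ∃ δ > 0, ∀ lam, dualVec n lam → pPlus S c a lam ≠ 0 → δ * ‖lam‖ ≤ -qh n lam := by
  obtain ⟨κ, hκ, hκle⟩ := exists_pos_forall_le_of_pos (S ×ˢ S) fun p => bh n (c p.1) (c p.2)
  set M := 1 + ∑ i ∈ S, ‖c i‖
  have hM : 0 < M := by positivity
  have hcM : ∀ i ∈ S, ‖c i‖ ≤ M := fun i hi => by
    have := Finset.single_le_sum (fun j _ => norm_nonneg (c j)) hi
    linarith
  set K := 2 * (n + 1) * M
  have hK : ∀ lam, ∀ i ∈ S, |bh n lam (c i)| ≤ K * ‖lam‖ := fun lam i hi => by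
    have := mul_le_mul_of_nonneg_left (hcM i hi) (by positivity : (0 : ℝ) ≤ 2 * (n + 1) * ‖lam‖)
    nlinarith [abs_bh_le lam (c i)]
  refine ⟨κ / (32 * K * M ^ 2), by positivity, fun lam hlam hp => ?_⟩
  have hsum : ∑ i ∈ S, (a i : ℝ) * bh n lam (c i) = 0 := by
    rw [← bh_sum_smul_right, hrel, ← bhRight_apply, map_zero]
  obtain ⟨⟨i, hi, hpos⟩, j, hj, hneg⟩ := exists_pos_and_exists_neg_of_sum_mul_abs_ne_zero hsum hp
  have hcone : ∀ i ∈ S, 0 ≤ bh n (c i) (c i) ∧ 0 ≤ timeCoord (c i) := fun i hi =>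
    closure_posCone_subset (hc i hi).2
  have hAi := one_le_abs_bh_of_dualVec hlam (hc i hi).1 hpos.ne'
  have hBj := one_le_abs_bh_of_dualVec hlam (hc j hj).1 hneg.ne
  rw [abs_of_pos hpos] at hAi
  rw [abs_of_neg hneg] at hBj
  have hκij := hκle (i, j) (Finset.mem_product.2 ⟨hi, hj⟩)
    (bh_pos_of_separated (hcone i hi) (hcone j hj) hpos hneg)
  have h := mul_norm_le_neg_bh_self (hcone i hi).1 (hcone j hj).1 hκ hκij (hcM i hi) (hcM j hj)
    hAi hBj ((le_abs_self _).trans (hK lam i hi)) ((neg_le_abs _).trans (hK lam j hj))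
  rw [qh, div_mul_eq_mul_div, div_le_iff₀ (by positivity)]
  linarith

lemma summable_norm_pPlus_mul_exp_neg {ι : Type*} (S : Finset ι) (c : ι → Fin (n+2) → ℝ)
    (a : ι → ℤ) {δ : ℝ} (hδ : 0 < δ)
    (hsupp : ∀ lam, dualVec n lam → pPlus S c a lam ≠ 0 → δ * ‖lam‖ ≤ -qh n lam)
    {y : ℝ} (hy : 0 < y) :
    Summable fun l : {x : Fin (n+2) → ℝ // dualVec n x} =>
      ‖(pPlus S c a l.1 : ℂ)‖ * Real.exp (-(2 * π * y * -qh n l.1)) := by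
  set C := ∑ i ∈ S, |(a i : ℝ)| * (2 * (n + 1) * ‖c i‖)
  refine ((summable_norm_mul_exp_neg_mul_norm_dualVec (c := 2 * π * y * δ)
    (by positivity)).mul_left C).of_nonneg_of_le (fun _ => by positivity) fun l => ?_
  rw [Complex.norm_real, Real.norm_eq_abs, ← mul_assoc]
  by_cases hl : pPlus S c a l.1 = 0
  · rw [hl, abs_zero, zero_mul]
    positivity
  · refine mul_le_mul (abs_pPlus_le S c a l.1) (Real.exp_le_exp.2 ?_) (by positivity)
      (by positivity)
    have := mul_le_mul_of_nonneg_left (hsupp l.1 l.2 hl) (by positivity : (0 : ℝ) ≤ 2 * π * y)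
    linarith

end PPlus

theorem theta_plus_converges_holomorphic_general (n : ℕ) {ι : Type*} (S : Finset ι)
    (c : ι → (Fin (n+2) → ℝ)) (a : ι → ℤ)
    (hc : ∀ i ∈ S, intVec n (c i) ∧ c i ∈ closure {x | 0 < bh n x x ∧ 0 < x 0 + x 1})
    (hrel : ∑ i ∈ S, (a i : ℝ) • c i = 0) :
    (∀ τ : ℂ, 0 < τ.im →
      Summable (fun lam : {x : Fin (n+2) → ℝ // dualVec n x} =>
        ‖((∑ i ∈ S, (a i : ℝ) * |bh n lam.1 (c i)| : ℝ) : ℂ) *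
          Complex.exp (2 * (π : ℂ) * Complex.I * τ * ((-(qh n lam.1) : ℝ) : ℂ))‖)) ∧
    DifferentiableOn ℂ
      (fun τ : ℂ => ∑' lam : {x : Fin (n+2) → ℝ // dualVec n x},
        ((∑ i ∈ S, (a i : ℝ) * |bh n lam.1 (c i)| : ℝ) : ℂ) *
          Complex.exp (2 * (π : ℂ) * Complex.I * τ * ((-(qh n lam.1) : ℝ) : ℂ)))
      {τ : ℂ | 0 < τ.im} := by
  obtain ⟨δ, hδ, hsupp⟩ := exists_pos_mul_norm_le_neg_qh_of_pPlus_ne_zero S c a hc hrel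
  have hr : ∀ l : {x // dualVec n x}, (pPlus S c a l.1 : ℂ) ≠ 0 → 0 ≤ -qh n l.1 := fun l hl =>
    (mul_nonneg hδ.le (norm_nonneg _)).trans (hsupp l.1 l.2 (Complex.ofReal_ne_zero.1 hl))
  have hs := fun y (hy : 0 < y) => summable_norm_pPlus_mul_exp_neg S c a hδ hsupp hy
  have hθ := summable_and_differentiableOn_tsum_mul_cexp
    (fun l : {x // dualVec n x} => (pPlus S c a l.1 : ℂ)) (fun l => -qh n l.1) hr hs
  exact hθ

/-- The series `Θ⁺(τ) = Σ_{λ∈K^∨} p⁺(λ) e^{−2πiτ Q(λ)}`, with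
`p⁺(λ) = Σ aᵢ|λ·cᵢ|`, converges absolutely for every `τ` in the upper half-plane, and
defines a holomorphic function there. -/
theorem theta_plus_converges_holomorphic (n : ℕ) {ι : Type*} (S : Finset ι)
    (c : ι → (Fin (n+2) → ℝ)) (a : ι → ℤ)
    (hc : ∀ i ∈ S, intVec n (c i) ∧ c i ∈ closure {x | 0 < bh n x x ∧ 0 < x 0 + x 1})
    (ha : ∀ i ∈ S, a i ≠ 0)
    (hrel : ∑ i ∈ S, (a i : ℝ) • c i = 0) :
    (∀ τ : ℂ, 0 < τ.im →
      Summable (fun lam : {x : Fin (n+2) → ℝ // dualVec n x} =>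
        ‖((∑ i ∈ S, (a i : ℝ) * |bh n lam.1 (c i)| : ℝ) : ℂ) *
          Complex.exp (2 * (π : ℂ) * Complex.I * τ * ((-(qh n lam.1) : ℝ) : ℂ))‖)) ∧
    DifferentiableOn ℂ
      (fun τ : ℂ => ∑' lam : {x : Fin (n+2) → ℝ // dualVec n x},
        ((∑ i ∈ S, (a i : ℝ) * |bh n lam.1 (c i)| : ℝ) : ℂ) *
          Complex.exp (2 * (π : ℂ) * Complex.I * τ * ((-(qh n lam.1) : ℝ) : ℂ)))
      {τ : ℂ | 0 < τ.im} :=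
  theta_plus_converges_holomorphic_general n S c a hc hrel
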